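/- Let n ≥ 1, let a₁, …, aₙ with aᵢ ≥ n for each i, and let E = {x ∈ ℝⁿ : Σᵢ xᵢ²/aᵢ² ≤ 1}. Then the lattice-point discrepancy of E satisfies |card(ℤⁿ ∩ E) − vol(E)| ≤ 2ⁿ · [∏ᵢ (aᵢ + √n) − ∏ᵢ (aᵢ/√n − √n)]. -/

import Mathlib

open MeasureTheory

/-! The ellipsoid is squeezed between the boxes `∏ [-aᵢ/√n, aᵢ/√n]` and `∏ [-aᵢ, aᵢ]`. A box of
side lengths `wᵢ` has volume `∏ wᵢ` and contains between `∏ (wᵢ - 1)` and `∏ (wᵢ + 1)` lattice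
points, so the lattice-point count and the volume of the ellipsoid both lie between
`∏ (2aᵢ/√n - 1)` and `∏ (2aᵢ + 1)`. As `aᵢ ≥ n` makes `aᵢ/√n ≥ √n ≥ 1`, these bounds widen to
`2ⁿ ∏ (aᵢ/√n - √n)` and `2ⁿ ∏ (aᵢ + √n)`. -/

section

variable {ι : Type*}

def integerPoints (ι : Type*) : Set (EuclideanSpace ℝ ι) := {p | ∀ i, ∃ m : ℤ, p i = m}

def box (l u : ι → ℝ) : Set (EuclideanSpace ℝ ι) :=
  WithLp.ofLp ⁻¹' Set.univ.pi fun i => Set.Icc (l i) (u i)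

theorem integerPoints_inter_box (l u : ι → ℝ) :
    integerPoints ι ∩ box l u =
      (fun m : ι → ℤ => WithLp.toLp 2 fun i => (m i : ℝ)) ''
        Set.univ.pi fun i => Set.Icc ⌈l i⌉ ⌊u i⌋ := by
  ext x
  simp only [integerPoints, box, Set.mem_inter_iff, Set.mem_preimage,
    Set.mem_univ_pi, Set.mem_image, ← Int.preimage_Icc]
  constructor
  · rintro ⟨hx, hbox⟩
    choose m hm using hx
    exact ⟨m, fun i => hm i ▸ hbox i, by ext i; exact (hm i).symm⟩
  · rintro ⟨m, hm, rfl⟩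
    exact ⟨fun i => ⟨m i, rfl⟩, hm⟩

variable [Fintype ι]

def ellipsoid (a : ι → ℝ) : Set (EuclideanSpace ℝ ι) := {x | ∑ i, x i ^ 2 / a i ^ 2 ≤ 1}

theorem finite_integerPoints_inter_box (l u : ι → ℝ) : (integerPoints ι ∩ box l u).Finite := by
  rw [integerPoints_inter_box]
  exact (Set.Finite.pi fun i => Set.finite_Icc _ _).image _

theorem natCard_integerPoints_inter_box (l u : ι → ℝ) :
    Nat.card ↥(integerPoints ι ∩ box l u) = ∏ i, Nat.card (Set.Icc ⌈l i⌉ ⌊u i⌋) := by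
  have hinj : Function.Injective fun m : ι → ℤ => WithLp.toLp 2 fun i => (m i : ℝ) :=
    fun m m' h => funext fun i => by simpa using congrFun (congrArg WithLp.ofLp h) i
  rw [integerPoints_inter_box, Nat.card_image_of_injective hinj,
    Nat.card_congr (Equiv.Set.univPi _), Nat.card_pi]

theorem abs_natCard_Icc_ceil_floor_sub_le {l u : ℝ} (h : l ≤ u) :
    |(Nat.card (Set.Icc ⌈l⌉ ⌊u⌋) : ℝ) - (u - l)| ≤ 1 := by
  have hcard : (Nat.card (Set.Icc ⌈l⌉ ⌊u⌋) : ℤ) = ⌊u⌋ + 1 - ⌈l⌉ := by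
    rw [Nat.card_eq_fintype_card]
    exact Int.card_fintype_Icc_of_le _ _
      (Int.ceil_le.2 (by push_cast; linarith [Int.lt_floor_add_one u]))
  have hcard' : (Nat.card (Set.Icc ⌈l⌉ ⌊u⌋) : ℝ) = ⌊u⌋ + 1 - ⌈l⌉ := by exact_mod_cast hcard
  rw [hcard', abs_le]
  constructor <;>
    linarith [Int.floor_le u, Int.lt_floor_add_one u, Int.le_ceil l, Int.ceil_lt_add_one l]

theorem natCard_integerPoints_inter_box_le {l u : ι → ℝ} (h : ∀ i, l i ≤ u i) :
    (Nat.card ↥(integerPoints ι ∩ box l u) : ℝ) ≤ ∏ i, (u i - l i + 1) := by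
  rw [natCard_integerPoints_inter_box, Nat.cast_prod]
  exact Finset.prod_le_prod (fun i _ => Nat.cast_nonneg _) fun i _ => by
    linarith [(abs_le.1 (abs_natCard_Icc_ceil_floor_sub_le (h i))).2]

theorem le_natCard_integerPoints_inter_box {l u : ι → ℝ} (h : ∀ i, l i + 1 ≤ u i) :
    ∏ i, (u i - l i - 1) ≤ (Nat.card ↥(integerPoints ι ∩ box l u) : ℝ) := by
  rw [natCard_integerPoints_inter_box, Nat.cast_prod]
  exact Finset.prod_le_prod (fun i _ => by linarith [h i]) fun i _ => by
    linarith [(abs_le.1 (abs_natCard_Icc_ceil_floor_sub_le (by linarith [h i] : l i ≤ u i))).1]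

theorem volume_box (l u : ι → ℝ) : volume (box l u) = ∏ i, ENNReal.ofReal (u i - l i) := by
  rw [box, (PiLp.volume_preserving_ofLp ι).measure_preimage
    (MeasurableSet.univ_pi fun _ => measurableSet_Icc).nullMeasurableSet, volume_pi_pi]
  simp only [Real.volume_Icc]

theorem volume_box_ne_top (l u : ι → ℝ) : volume (box l u) ≠ ⊤ := by
  rw [volume_box]
  exact ENNReal.prod_ne_top fun _ _ => ENNReal.ofReal_ne_top

theorem toReal_volume_box {l u : ι → ℝ} (h : ∀ i, l i ≤ u i) :
    (volume (box l u)).toReal = ∏ i, (u i - l i) := by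
  rw [volume_box, ENNReal.toReal_prod]
  exact Finset.prod_congr rfl fun i _ => ENNReal.toReal_ofReal (sub_nonneg.2 (h i))

theorem abs_natCard_integerPoints_inter_sub_volume_le {S : Set (EuclideanSpace ℝ ι)}
    {l u l' u' : ι → ℝ} (hlu : ∀ i, l i + 1 ≤ u i) (hlu' : ∀ i, l' i ≤ u' i)
    (hS : box l u ⊆ S) (hS' : S ⊆ box l' u') :
    |(Nat.card ↥(integerPoints ι ∩ S) : ℝ) - (volume S).toReal|
      ≤ ∏ i, (u' i - l' i + 1) - ∏ i, (u i - l i - 1) := by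
  have hfin := finite_integerPoints_inter_box l' u'
  have hpts' := Set.inter_subset_inter_right (integerPoints ι) hS'
  have hpts := Set.inter_subset_inter_right (integerPoints ι) hS
  have hcard_le : (Nat.card ↥(integerPoints ι ∩ S) : ℝ) ≤ ∏ i, (u' i - l' i + 1) :=
    (Nat.cast_le.2 (Nat.card_mono hfin hpts')).trans (natCard_integerPoints_inter_box_le hlu')
  have le_card : ∏ i, (u i - l i - 1) ≤ (Nat.card ↥(integerPoints ι ∩ S) : ℝ) :=
    (le_natCard_integerPoints_inter_box hlu).trans
      (Nat.cast_le.2 (Nat.card_mono (hfin.subset hpts') hpts))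
  have hvol_le : (volume S).toReal ≤ ∏ i, (u' i - l' i + 1) := calc
    _ ≤ (volume (box l' u')).toReal :=
      ENNReal.toReal_mono (volume_box_ne_top l' u') (measure_mono hS')
    _ = ∏ i, (u' i - l' i) := toReal_volume_box hlu'
    _ ≤ _ := Finset.prod_le_prod (fun i _ => sub_nonneg.2 (hlu' i)) fun i _ => by linarith
  have le_vol : ∏ i, (u i - l i - 1) ≤ (volume S).toReal := calc
    _ ≤ ∏ i, (u i - l i) :=
      Finset.prod_le_prod (fun i _ => by linarith [hlu i]) fun i _ => by linarith
    _ = (volume (box l u)).toReal := (toReal_volume_box fun i => by linarith [hlu i]).symm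
    _ ≤ _ := ENNReal.toReal_mono
      (ne_top_of_le_ne_top (volume_box_ne_top l' u') (measure_mono hS')) (measure_mono hS)
  exact abs_sub_le_of_le_of_le le_card hcard_le le_vol hvol_le

theorem ellipsoid_subset_box {a : ι → ℝ} (ha : ∀ i, 0 < a i) : ellipsoid a ⊆ box (-a) a := by
  intro x hx i _
  have hxi : x i ^ 2 / a i ^ 2 ≤ 1 :=
    (Finset.single_le_sum (f := fun j => x j ^ 2 / a j ^ 2) (fun j _ => by positivity)
      (Finset.mem_univ i)).trans hx
  rw [div_le_one (by positivity [ha i])] at hxi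
  exact abs_le_of_sq_le_sq' hxi (ha i).le

theorem box_subset_ellipsoid {a r : ι → ℝ} (h : ∑ i, r i ^ 2 / a i ^ 2 ≤ 1) :
    box (-r) r ⊆ ellipsoid a := by
  intro x hx
  refine (Finset.sum_le_sum fun i _ => ?_).trans h
  have hxi := hx i (Set.mem_univ i)
  exact div_le_div_of_nonneg_right (sq_le_sq' hxi.1 hxi.2) (sq_nonneg _)

theorem sum_sq_div_sqrt_card_div_sq_le_one {a : ι → ℝ} (ha : ∀ i, a i ≠ 0) :
    ∑ i, (a i / √(Fintype.card ι)) ^ 2 / a i ^ 2 ≤ 1 := by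
  calc ∑ i, (a i / √(Fintype.card ι)) ^ 2 / a i ^ 2 = ∑ _i : ι, ((Fintype.card ι : ℝ))⁻¹ :=
        Finset.sum_congr rfl fun i _ => by
          rw [div_pow, Real.sq_sqrt (Nat.cast_nonneg _)]; field_simp [ha i]
    _ ≤ 1 := by
      rw [Finset.sum_const, Finset.card_univ, nsmul_eq_mul]
      exact mul_inv_le_one

end

theorem ellipsoid_lattice_discrepancy_general (n : ℕ)
    (a : Fin n → ℝ) (ha : ∀ i, (n : ℝ) ≤ a i) :
    |(Nat.card {p : EuclideanSpace ℝ (Fin n) //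
          (∀ i, ∃ m : ℤ, p i = m) ∧ ∑ i, (p i) ^ 2 / (a i) ^ 2 ≤ 1} : ℝ)
        - (volume {x : EuclideanSpace ℝ (Fin n) | ∑ i, (x i) ^ 2 / (a i) ^ 2 ≤ 1}).toReal|
      ≤ (2 : ℝ) ^ n
          * (∏ i, (a i + Real.sqrt n) - ∏ i, (a i / Real.sqrt n - Real.sqrt n)) := by
  have hs : ∀ i : Fin n, 1 ≤ √n := fun i => Real.one_le_sqrt.2 (by exact_mod_cast i.pos)
  have ha₀ : ∀ i, 0 < a i := fun i => one_pos.trans_le ((Real.one_le_sqrt.1 (hs i)).trans (ha i))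
  have hr : ∀ i, √n ≤ a i / √n := fun i =>
    Real.div_sqrt.symm.trans_le (div_le_div_of_nonneg_right (ha i) (Real.sqrt_nonneg _))
  have hin : box (-fun i => a i / √n) (fun i => a i / √n) ⊆ ellipsoid a :=
    box_subset_ellipsoid (by simpa using sum_sq_div_sqrt_card_div_sq_le_one fun i => (ha₀ i).ne')
  calc _ ≤ ∏ i, (a i - -a i + 1) - ∏ i, (a i / √n - -(a i / √n) - 1) :=
        abs_natCard_integerPoints_inter_sub_volume_le (fun i => by linarith [hs i, hr i])
          (fun i => by linarith [ha₀ i]) hin (ellipsoid_subset_box ha₀)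
    _ ≤ ∏ i, 2 * (a i + √n) - ∏ i, 2 * (a i / √n - √n) :=
        sub_le_sub
          (Finset.prod_le_prod (fun i _ => by linarith [ha₀ i]) fun i _ => by linarith [hs i])
          (Finset.prod_le_prod (fun i _ => by linarith [hr i]) fun i _ => by linarith [hs i])
    _ = _ := by
      rw [Finset.prod_mul_distrib, Finset.prod_mul_distrib, Finset.prod_const, Finset.card_univ,
        Fintype.card_fin, mul_sub]

/-- Lattice-point discrepancy estimate for an ellipsoid with semi-axes `a i ≥ n`:
`|card(ℤⁿ ∩ E) - vol E| ≤ 2^n (∏ i, (a i + √n) - ∏ i, (a i / √n - √n))`. -/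
theorem ellipsoid_lattice_discrepancy (n : ℕ) (hn : 1 ≤ n)
    (a : Fin n → ℝ) (ha : ∀ i, (n : ℝ) ≤ a i) :
    |(Nat.card {p : EuclideanSpace ℝ (Fin n) //
          (∀ i, ∃ m : ℤ, p i = m) ∧ ∑ i, (p i) ^ 2 / (a i) ^ 2 ≤ 1} : ℝ)
        - (volume {x : EuclideanSpace ℝ (Fin n) | ∑ i, (x i) ^ 2 / (a i) ^ 2 ≤ 1}).toReal|
      ≤ (2 : ℝ) ^ n
          * (∏ i, (a i + Real.sqrt n) - ∏ i, (a i / Real.sqrt n - Real.sqrt n)) :=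
  ellipsoid_lattice_discrepancy_general n a ha
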